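/- Let $r_k = 2^{-k}$ for $k \in \mathbb{N}$, and let $3 < q < \infty$, $p = \frac{2q}{q-3}$, and $1 \le p_* < p$. Then there is a constant $C$ (depending on $p_*, q$) such that for every measurable function $f : (-1,0) \times B(2) \to \mathbb{R}$, $$\sum_{k=0}^{\infty} r_k^{1 - \frac{2}{p_*} - \frac{3}{q}} \left( \int_{-r_k^2}^{0} \|f(\cdot, s)\|_{L^q(B(2))}^{p_*} \, ds \right)^{1/p_*} \le C \, \|f\|_{L^{p,1}(-1,0; L^q(B(2)))}.$$ -/
import Mathlib


open MeasureTheory ENNReal Set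

/-- The `L^q` norm in the spatial variable on the ball `B(2) ⊂ ℝ³`. -/
noncomputable def sptNorm (q : ℝ) (g : (Fin 3 → ℝ) → ℝ) : ℝ≥0∞ :=
  (∫⁻ x in Metric.ball (0 : Fin 3 → ℝ) 2, ENNReal.ofReal |g x| ^ q) ^ (1 / q)

/-- The Lorentz `L^{p,1}(-1,0;L^q(B(2)))` norm in the time variable:
`∫_0^∞ |{t ∈ (-1,0) : ‖f(·,t)‖_{L^q(B(2))} > lam}|^{1/p} dlam`. -/
noncomputable def lorentzNorm (p q : ℝ) (f : ℝ → (Fin 3 → ℝ) → ℝ) : ℝ≥0∞ :=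
  ∫⁻ lam in Set.Ioi (0 : ℝ),
    volume {t ∈ Set.Ioo (-1 : ℝ) 0 | ENNReal.ofReal lam < sptNorm q (f t)} ^ (1 / p)

lemma dyadicSum (a e γ : ℝ) (ha : a < 0) (he : 0 < e) (hγ : γ = a / 2 + e) (hγpos : 0 < γ) :
    ∃ C : ℝ≥0∞, C ≠ ⊤ ∧ ∀ D : ℝ≥0∞, D ≤ 1 →
      ∑' k : ℕ, (2 : ℝ≥0∞) ^ (-(k : ℝ) * a) * min ((2 : ℝ≥0∞) ^ (-(k : ℝ) * 2)) D ^ e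
        ≤ C * D ^ γ := by
  classical
  have h2top : (2 : ℝ≥0∞) ≠ ⊤ := by simp
  have h2zero : (2 : ℝ≥0∞) ≠ 0 := by simp
  have h2one : (1 : ℝ≥0∞) < 2 := by norm_num
  set ρ1 : ℝ≥0∞ := (2 : ℝ≥0∞) ^ a with hρ1
  set ρ2 : ℝ≥0∞ := (2 : ℝ≥0∞) ^ (-2 * γ) with hρ2
  have hρ1lt : ρ1 < 1 := by
    calc ρ1 < (2 : ℝ≥0∞) ^ (0 : ℝ) := ENNReal.rpow_lt_rpow_of_exponent_lt h2one h2top ha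
    _ = 1 := ENNReal.rpow_zero
  have hρ2lt : ρ2 < 1 := by
    calc ρ2 < (2 : ℝ≥0∞) ^ (0 : ℝ) :=
        ENNReal.rpow_lt_rpow_of_exponent_lt h2one h2top (by linarith)
    _ = 1 := ENNReal.rpow_zero
  have hinv : ∀ ρ : ℝ≥0∞, ρ < 1 → (1 - ρ)⁻¹ ≠ ⊤ := by
    intro ρ hρ
    rw [ENNReal.inv_ne_top]
    simpa [tsub_eq_zero_iff_le] using hρ.not_ge
  refine ⟨(1 - ρ1)⁻¹ + (1 - ρ2)⁻¹, ENNReal.add_ne_top.mpr ⟨hinv _ hρ1lt, hinv _ hρ2lt⟩, ?_⟩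
  intro D hD1
  rcases eq_or_ne D 0 with rfl | hD0
  · simp [ENNReal.zero_rpow_of_pos he]
  have hDtop : D ≠ ⊤ := (lt_of_le_of_lt hD1 (by norm_num)).ne
  have hex : ∃ k : ℕ, (2 : ℝ≥0∞) ^ (-(k : ℝ) * 2) ≤ D := by
    obtain ⟨n, hn⟩ := ENNReal.exists_inv_two_pow_lt hD0
    refine ⟨n, ?_⟩
    calc (2 : ℝ≥0∞) ^ (-(n : ℝ) * 2) ≤ (2 : ℝ≥0∞) ^ (-(n : ℝ)) :=
        ENNReal.rpow_le_rpow_of_exponent_le h2one.le (by nlinarith [Nat.cast_nonneg (α := ℝ) n])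
    _ = ((2 : ℝ≥0∞) ^ (n : ℕ))⁻¹ := by
        rw [← ENNReal.rpow_natCast 2 n, ← ENNReal.rpow_neg]
    _ = ((2 : ℝ≥0∞)⁻¹) ^ (n : ℕ) := ENNReal.inv_pow
    _ ≤ D := hn.le
  set K := Nat.find hex with hK
  have hPK : (2 : ℝ≥0∞) ^ (-(K : ℝ) * 2) ≤ D := Nat.find_spec hex
  have hmin : ∀ k < K, D < (2 : ℝ≥0∞) ^ (-(k : ℝ) * 2) := fun k hk =>
    not_le.mp (Nat.find_min hex hk)
  have key : ∀ k : ℕ, (2 : ℝ≥0∞) ^ (-(k : ℝ) * a) * min ((2 : ℝ≥0∞) ^ (-(k : ℝ) * 2)) D ^ e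
      ≤ D ^ γ * (if k < K then ρ1 ^ (K - 1 - k) else ρ2 ^ (k - K)) := by
    intro k
    by_cases hk : k < K
    · rw [if_pos hk]
      have hK1 : K - 1 < K := Nat.sub_lt (Nat.pos_of_ne_zero (by omega)) one_pos
      have hkK1 : k ≤ K - 1 := Nat.le_sub_one_of_lt hk
      have hDK1 : D ≤ (2 : ℝ≥0∞) ^ (-((K - 1 : ℕ) : ℝ) * 2) := (hmin _ hK1).le
      have h1 : min ((2 : ℝ≥0∞) ^ (-(k : ℝ) * 2)) D ^ e ≤ D ^ e :=
        ENNReal.rpow_le_rpow (min_le_right _ _) he.le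
      have h2 : D ^ e = D ^ γ * D ^ (-a / 2) := by
        rw [← ENNReal.rpow_add _ _ hD0 hDtop]
        congr 1; linarith
      calc (2 : ℝ≥0∞) ^ (-(k : ℝ) * a) * min ((2 : ℝ≥0∞) ^ (-(k : ℝ) * 2)) D ^ e
          ≤ (2 : ℝ≥0∞) ^ (-(k : ℝ) * a) * (D ^ γ * D ^ (-a / 2)) := by
            rw [← h2]; exact mul_le_mul_right h1 _
        _ = D ^ γ * ((2 : ℝ≥0∞) ^ (-(k : ℝ) * a) * D ^ (-a / 2)) := by ring
        _ ≤ D ^ γ * ρ1 ^ (K - 1 - k) := by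
            apply mul_le_mul_right
            have e1 : (2 : ℝ≥0∞) ^ (-(k : ℝ) * a) = ((2 : ℝ≥0∞) ^ ((k : ℝ) * 2)) ^ (-a / 2) := by
              rw [← ENNReal.rpow_mul]; congr 1; ring
            rw [e1, ← ENNReal.mul_rpow_of_nonneg _ _ (by linarith : (0:ℝ) ≤ -a / 2)]
            have e2 : (2 : ℝ≥0∞) ^ ((k : ℝ) * 2) * D
                ≤ (2 : ℝ≥0∞) ^ (((k : ℝ) - ((K - 1 : ℕ) : ℝ)) * 2) := by
              calc (2 : ℝ≥0∞) ^ ((k : ℝ) * 2) * D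
                  ≤ (2 : ℝ≥0∞) ^ ((k : ℝ) * 2) * (2 : ℝ≥0∞) ^ (-((K - 1 : ℕ) : ℝ) * 2) :=
                    mul_le_mul_right hDK1 _
                _ = (2 : ℝ≥0∞) ^ (((k : ℝ) - ((K - 1 : ℕ) : ℝ)) * 2) := by
                    rw [← ENNReal.rpow_add _ _ h2zero h2top]; congr 1; ring
            calc ((2 : ℝ≥0∞) ^ ((k : ℝ) * 2) * D) ^ (-a / 2)
                ≤ ((2 : ℝ≥0∞) ^ (((k : ℝ) - ((K - 1 : ℕ) : ℝ)) * 2)) ^ (-a / 2) :=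
                  ENNReal.rpow_le_rpow e2 (by linarith)
              _ = ρ1 ^ (K - 1 - k) := by
                  rw [hρ1, ← ENNReal.rpow_natCast ((2:ℝ≥0∞) ^ a) (K - 1 - k),
                    ← ENNReal.rpow_mul, ← ENNReal.rpow_mul]
                  congr 1
                  rw [Nat.cast_sub hkK1]
                  ring
    · rw [if_neg hk]
      push_neg at hk
      have h1 : min ((2 : ℝ≥0∞) ^ (-(k : ℝ) * 2)) D ^ e ≤ ((2 : ℝ≥0∞) ^ (-(k : ℝ) * 2)) ^ e :=
        ENNReal.rpow_le_rpow (min_le_left _ _) he.le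
      calc (2 : ℝ≥0∞) ^ (-(k : ℝ) * a) * min ((2 : ℝ≥0∞) ^ (-(k : ℝ) * 2)) D ^ e
          ≤ (2 : ℝ≥0∞) ^ (-(k : ℝ) * a) * ((2 : ℝ≥0∞) ^ (-(k : ℝ) * 2)) ^ e :=
            mul_le_mul_right h1 _
        _ = (2 : ℝ≥0∞) ^ (-(K : ℝ) * 2 * γ) * (2 : ℝ≥0∞) ^ ((-(k : ℝ) + (K : ℝ)) * 2 * γ) := by
            rw [← ENNReal.rpow_mul, ← ENNReal.rpow_add _ _ h2zero h2top,
              ← ENNReal.rpow_add _ _ h2zero h2top]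
            congr 1
            rw [hγ]; ring
        _ ≤ D ^ γ * ρ2 ^ (k - K) := by
            apply mul_le_mul'
            · refine le_trans (le_of_eq ?_) (ENNReal.rpow_le_rpow hPK hγpos.le)
              rw [← ENNReal.rpow_mul]
            · refine le_of_eq ?_
              rw [hρ2, ← ENNReal.rpow_natCast ((2:ℝ≥0∞) ^ (-2 * γ)) (k - K),
                ← ENNReal.rpow_mul]
              congr 1
              rw [Nat.cast_sub hk]
              ring
  calc ∑' k : ℕ, (2 : ℝ≥0∞) ^ (-(k : ℝ) * a) * min ((2 : ℝ≥0∞) ^ (-(k : ℝ) * 2)) D ^ e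
      ≤ ∑' k : ℕ, D ^ γ * (if k < K then ρ1 ^ (K - 1 - k) else ρ2 ^ (k - K)) :=
        ENNReal.tsum_le_tsum key
    _ = D ^ γ * ∑' k : ℕ, (if k < K then ρ1 ^ (K - 1 - k) else ρ2 ^ (k - K)) :=
        ENNReal.tsum_mul_left
    _ ≤ D ^ γ * ((1 - ρ1)⁻¹ + (1 - ρ2)⁻¹) := by
        apply mul_le_mul_right
        have hsplit : ∀ k : ℕ, (if k < K then ρ1 ^ (K - 1 - k) else ρ2 ^ (k - K))
            = (if k < K then ρ1 ^ (K - 1 - k) else 0)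
              + (if k < K then 0 else ρ2 ^ (k - K)) := by
          intro k; by_cases hk : k < K <;> simp [hk]
        rw [tsum_congr hsplit, ENNReal.tsum_add]
        apply add_le_add
        · rw [tsum_eq_sum (s := Finset.range K)
            (by intro b hb; rw [if_neg]; simpa using hb)]
          have : ∑ k ∈ Finset.range K, (if k < K then ρ1 ^ (K - 1 - k) else 0)
              = ∑ k ∈ Finset.range K, ρ1 ^ (K - 1 - k) := by
            apply Finset.sum_congr rfl
            intro k hk; rw [if_pos (Finset.mem_range.mp hk)]
          rw [this, Finset.sum_range_reflect (fun j => ρ1 ^ j) K]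
          calc ∑ k ∈ Finset.range K, ρ1 ^ k ≤ ∑' k : ℕ, ρ1 ^ k := ENNReal.sum_le_tsum _
            _ = (1 - ρ1)⁻¹ := ENNReal.tsum_geometric ρ1
        · have hinj : Function.Injective (fun j : ℕ => j + K) := add_left_injective K
          have hsupp : Function.support (fun k : ℕ => if k < K then 0 else ρ2 ^ (k - K))
              ⊆ Set.range (fun j : ℕ => j + K) := by
            intro k hk
            simp only [Function.mem_support] at hk
            by_cases h : k < K
            · simp [h] at hk
            · exact ⟨k - K, by simp; omega⟩
          rw [← hinj.tsum_eq hsupp]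
          simp only [Nat.add_sub_cancel]
          have : ∀ j : ℕ, (if j + K < K then (0:ℝ≥0∞) else ρ2 ^ j) = ρ2 ^ j := by
            intro j; rw [if_neg (by omega)]
          rw [tsum_congr this]
          exact le_of_eq (ENNReal.tsum_geometric ρ2)
    _ = (1 - ρ1)⁻¹ * D ^ γ + (1 - ρ2)⁻¹ * D ^ γ := by ring
    _ = ((1 - ρ1)⁻¹ + (1 - ρ2)⁻¹) * D ^ γ := by ring

lemma stepA (ps : ℝ) (hps : 1 ≤ ps) (ν : Measure ℝ) [IsFiniteMeasure ν]
    (g : ℝ → ℝ≥0∞) (hg : AEMeasurable g ν) :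
    (∫⁻ t, g t ^ ps ∂ν) ^ (1 / ps)
      ≤ ENNReal.ofReal ps ^ (1 / ps)
        * ∫⁻ l in Ioi (0 : ℝ), ν {t | ENNReal.ofReal l < g t} ^ (1 / ps) := by
  have hps0 : (0 : ℝ) < ps := lt_of_lt_of_le one_pos hps
  have hps1 : (0 : ℝ) ≤ ps - 1 := by linarith
  have hinvps : (0 : ℝ) < 1 / ps := by positivity
  have hcoeff : (ENNReal.ofReal ps ^ (1 / ps)) ≠ 0 :=
    (ENNReal.rpow_pos (ENNReal.ofReal_pos.mpr hps0) ENNReal.ofReal_ne_top).ne'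
  set F : ℝ → ℝ≥0∞ := fun l => ν {t | ENNReal.ofReal l < g t} ^ (1 / ps) with hF
  have hFanti : Antitone F := by
    intro l1 l2 h
    apply ENNReal.rpow_le_rpow _ hinvps.le
    exact measure_mono fun t ht => lt_of_le_of_lt (ENNReal.ofReal_le_ofReal h) ht
  have hFmeas : Measurable F := hFanti.measurable
  set A := ∫⁻ l in Ioi (0 : ℝ), F l with hA
  rcases eq_or_ne A ⊤ with hAtop | hAtop
  · rw [hAtop, ENNReal.mul_top hcoeff]
    exact le_top
  by_cases hginf : ν {t | g t = ⊤} = 0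
  swap
  · exfalso
    apply hAtop
    rw [eq_top_iff]
    have hc0 : (ν {t | g t = ⊤}) ^ (1 / ps) ≠ 0 := by
      rw [Ne, ENNReal.rpow_eq_zero_iff]
      push_neg
      constructor
      · intro h; exact absurd h hginf
      · intro h; exfalso; exact (measure_ne_top ν _) h
    calc (⊤ : ℝ≥0∞) = (ν {t | g t = ⊤}) ^ (1 / ps) * volume (Ioi (0:ℝ)) := by
          rw [Real.volume_Ioi, ENNReal.mul_top hc0]
      _ = ∫⁻ _ in Ioi (0:ℝ), (ν {t | g t = ⊤}) ^ (1 / ps) := (setLIntegral_const _ _).symm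
      _ ≤ ∫⁻ l in Ioi (0:ℝ), F l := by
          apply setLIntegral_mono hFmeas
          intro l hl
          apply ENNReal.rpow_le_rpow _ hinvps.le
          apply measure_mono
          intro t ht
          simp only [mem_setOf_eq] at ht ⊢
          rw [ht]
          exact ENNReal.ofReal_lt_top
  -- main case
  have hae : ∀ᵐ t ∂ν, g t ≠ ⊤ := by
    rw [ae_iff]
    simpa using hginf
  set f' : ℝ → ℝ := fun t => (g t).toReal with hf'
  have hf'nn : 0 ≤ᵐ[ν] f' := Filter.Eventually.of_forall fun t => ENNReal.toReal_nonneg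
  have hf'mble : AEMeasurable f' ν := ENNReal.measurable_toReal.comp_aemeasurable hg
  have step1 : ∫⁻ t, g t ^ ps ∂ν = ∫⁻ t, ENNReal.ofReal (f' t ^ ps) ∂ν := by
    apply lintegral_congr_ae
    filter_upwards [hae] with t ht
    rw [← ENNReal.ofReal_rpow_of_nonneg ENNReal.toReal_nonneg hps0.le]
    congr 1
    exact (ENNReal.ofReal_toReal ht).symm
  have step2 := lintegral_rpow_eq_lintegral_meas_lt_mul ν hf'nn hf'mble hps0
  have hset : ∀ l : ℝ, 0 ≤ l → ν {t | l < f' t} = ν {t | ENNReal.ofReal l < g t} := by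
    intro l hl
    apply measure_congr
    apply Filter.eventuallyEq_set.mpr
    filter_upwards [hae] with t ht
    exact (ENNReal.ofReal_lt_iff_lt_toReal hl ht).symm
  have key0 : ∀ l : ℝ, 0 < l → F l * ENNReal.ofReal l ≤ A := by
    intro l hl
    calc F l * ENNReal.ofReal l = ∫⁻ _ in Ioo (0:ℝ) l, F l := by
          rw [setLIntegral_const, Real.volume_Ioo, sub_zero]
      _ ≤ ∫⁻ s in Ioo (0:ℝ) l, F s := by
          apply setLIntegral_mono hFmeas
          intro s hs
          exact hFanti hs.2.le
      _ ≤ A := lintegral_mono_set Ioo_subset_Ioi_self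
  have key1 : ∀ l ∈ Ioi (0:ℝ),
      ν {t | l < f' t} * ENNReal.ofReal (l ^ (ps - 1)) ≤ F l * A ^ (ps - 1) := by
    intro l hl
    have hl0 : (0:ℝ) < l := hl
    rw [hset l hl0.le]
    have hFl : ν {t | ENNReal.ofReal l < g t} = F l ^ ps := by
      show _ = (ν {t | ENNReal.ofReal l < g t} ^ (1 / ps)) ^ ps
      rw [← ENNReal.rpow_mul, one_div, inv_mul_cancel₀ hps0.ne', ENNReal.rpow_one]
    have hFsplit : F l ^ ps = F l * F l ^ (ps - 1) := by
      have h1 := ENNReal.rpow_add_of_nonneg (x := F l) 1 (ps - 1) zero_le_one hps1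
      rw [ENNReal.rpow_one] at h1
      nth_rewrite 1 [show ps = 1 + (ps - 1) by ring]
      exact h1
    rw [hFl, ← ENNReal.ofReal_rpow_of_pos hl0]
    calc F l ^ ps * ENNReal.ofReal l ^ (ps - 1)
        = F l * (F l ^ (ps - 1) * ENNReal.ofReal l ^ (ps - 1)) := by
          rw [hFsplit, mul_assoc]
      _ = F l * (F l * ENNReal.ofReal l) ^ (ps - 1) := by
          rw [ENNReal.mul_rpow_of_nonneg _ _ hps1]
      _ ≤ F l * A ^ (ps - 1) :=
          mul_le_mul_right (ENNReal.rpow_le_rpow (key0 l hl0) hps1) _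
  have step3 : ∫⁻ t, g t ^ ps ∂ν ≤ ENNReal.ofReal ps * A ^ ps := by
    rw [step1, step2]
    apply mul_le_mul_right
    calc ∫⁻ l in Ioi (0:ℝ), ν {t | l < f' t} * ENNReal.ofReal (l ^ (ps - 1))
        ≤ ∫⁻ l in Ioi (0:ℝ), F l * A ^ (ps - 1) := setLIntegral_mono (hFmeas.mul_const _) key1
      _ = A ^ (ps - 1) * ∫⁻ l in Ioi (0:ℝ), F l := by
          rw [← lintegral_const_mul' _ _ (ENNReal.rpow_ne_top_of_nonneg hps1 hAtop)]
          simp_rw [mul_comm]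
      _ = A ^ (ps - 1) * A ^ (1:ℝ) := by rw [ENNReal.rpow_one]
      _ = A ^ ps := by
          rw [← ENNReal.rpow_add_of_nonneg _ _ hps1 zero_le_one]
          norm_num
  calc (∫⁻ t, g t ^ ps ∂ν) ^ (1 / ps) ≤ (ENNReal.ofReal ps * A ^ ps) ^ (1 / ps) :=
        ENNReal.rpow_le_rpow step3 hinvps.le
    _ = ENNReal.ofReal ps ^ (1 / ps) * A := by
        rw [ENNReal.mul_rpow_of_nonneg _ _ hinvps.le, ← ENNReal.rpow_mul,
          mul_one_div, div_self hps0.ne', ENNReal.rpow_one]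

/-- Lemma A.5 of the paper: dyadic summability of scaled subcritical norms from the
critical Lorentz norm. -/
theorem stmt0 (q pstar p : ℝ) (hq3 : 3 < q) (hp : p = 2 * q / (q - 3))
    (hps1 : 1 ≤ pstar) (hps2 : pstar < p) :
    ∃ C : ℝ≥0∞, C ≠ ⊤ ∧ ∀ f : ℝ → (Fin 3 → ℝ) → ℝ, Measurable (Function.uncurry f) →
      ∑' k : ℕ, ENNReal.ofReal (((2 : ℝ) ^ (-(k : ℝ))) ^ (1 - 2 / pstar - 3 / q)) *
          (∫⁻ s in Set.Ioc (-(((2 : ℝ) ^ (-(k : ℝ))) ^ 2)) 0, sptNorm q (f s) ^ pstar) ^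
            (1 / pstar)
        ≤ C * lorentzNorm p q f := by
  have hq0 : (0:ℝ) < q := by linarith
  have hq3' : (0:ℝ) < q - 3 := by linarith
  have hppos : (0:ℝ) < p := by rw [hp]; positivity
  have hps0 : (0:ℝ) < pstar := lt_of_lt_of_le one_pos hps1
  set a : ℝ := 1 - 2 / pstar - 3 / q with hadef
  have h2p : 2 / p = 1 - 3 / q := by
    rw [hp]
    field_simp
  have h2p' : 2 / p = 2 * (1 / p) := by ring
  have h2ps' : 2 / pstar = 2 * (1 / pstar) := by ring
  have ha : a < 0 := by
    have h1 : 2 / p < 2 / pstar := div_lt_div_of_pos_left two_pos hps0 hps2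
    rw [hadef]
    rw [h2p] at h1
    linarith
  have hγeq : (1:ℝ) / p = a / 2 + 1 / pstar := by
    rw [hadef]
    have := h2p
    linarith
  obtain ⟨C₂, hC₂top, hC₂⟩ :=
    dyadicSum a (1 / pstar) (1 / p) ha (by positivity) hγeq (by positivity)
  set Cp : ℝ≥0∞ := ENNReal.ofReal pstar ^ (1 / pstar) with hCp
  refine ⟨Cp * C₂, ENNReal.mul_ne_top
    (ENNReal.rpow_ne_top_of_nonneg (by positivity) ENNReal.ofReal_ne_top) hC₂top, ?_⟩
  intro f hf
  set g : ℝ → ℝ≥0∞ := fun s => sptNorm q (f s) with hg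
  have hgm : Measurable g := by
    have h1 : Measurable fun st : ℝ × (Fin 3 → ℝ) => ENNReal.ofReal |Function.uncurry f st| ^ q :=
      (ENNReal.continuous_rpow_const.measurable).comp (ENNReal.measurable_ofReal.comp hf.abs)
    have h2 : Measurable fun s : ℝ =>
        ∫⁻ x in Metric.ball (0 : Fin 3 → ℝ) 2, ENNReal.ofReal |f s x| ^ q :=
      h1.lintegral_prod_right'
    exact (ENNReal.continuous_rpow_const.measurable).comp h2
  set d : ℝ → ℝ≥0∞ :=
    fun l => volume {t ∈ Set.Ioo (-1:ℝ) 0 | ENNReal.ofReal l < g t} with hd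
  have hlor : lorentzNorm p q f = ∫⁻ l in Ioi (0:ℝ), d l ^ (1/p) := rfl
  set I : ℕ → Set ℝ := fun k => Set.Ioc (-(((2:ℝ) ^ (-(k:ℝ))) ^ 2)) 0 with hI
  set μk : ℕ → ℝ → ℝ≥0∞ :=
    fun k l => volume ({t | ENNReal.ofReal l < g t} ∩ I k) with hμk
  have hsetm : ∀ l : ℝ, MeasurableSet {t : ℝ | ENNReal.ofReal l < g t} :=
    fun l => measurableSet_lt measurable_const hgm
  have hrk2 : ∀ k : ℕ, ENNReal.ofReal (((2:ℝ) ^ (-(k:ℝ))) ^ 2) = (2:ℝ≥0∞) ^ (-(k:ℝ) * 2) := by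
    intro k
    rw [show (((2:ℝ) ^ (-(k:ℝ))) ^ 2) = (2:ℝ) ^ (-(k:ℝ) * 2) by
      rw [← Real.rpow_natCast ((2:ℝ) ^ (-(k:ℝ))) 2, ← Real.rpow_mul (by norm_num : (0:ℝ) ≤ 2)]
      norm_num]
    rw [← ENNReal.ofReal_rpow_of_pos two_pos]
    norm_num
  have hw : ∀ k : ℕ, ENNReal.ofReal (((2:ℝ) ^ (-(k:ℝ))) ^ a) = (2:ℝ≥0∞) ^ (-(k:ℝ) * a) := by
    intro k
    rw [show ((2:ℝ) ^ (-(k:ℝ))) ^ a = (2:ℝ) ^ (-(k:ℝ) * a) from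
      (Real.rpow_mul (by norm_num : (0:ℝ) ≤ 2) _ _).symm]
    rw [← ENNReal.ofReal_rpow_of_pos two_pos]
    norm_num
  have hvolI : ∀ k, volume (I k) = (2:ℝ≥0∞) ^ (-(k:ℝ) * 2) := by
    intro k
    simp only [hI]
    rw [Real.volume_Ioc, ← hrk2 k]
    norm_num
  have hμle : ∀ (k : ℕ) (l : ℝ), μk k l ≤ min ((2:ℝ≥0∞) ^ (-(k:ℝ) * 2)) (d l) := by
    intro k l
    apply le_min
    · rw [← hvolI k]
      exact measure_mono Set.inter_subset_right
    · simp only [hμk, hd]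
      have hsub : {t : ℝ | ENNReal.ofReal l < g t} ∩ I k
          ⊆ {t ∈ Set.Ioo (-1:ℝ) 0 | ENNReal.ofReal l < g t} ∪ {0} := by
        rintro t ⟨ht1, ht2⟩
        simp only [hI] at ht2
        rcases eq_or_lt_of_le ht2.2 with h0 | h0
        · right; simp [h0]
        · left
          refine ⟨⟨?_, h0⟩, ht1⟩
          have h21 : (2:ℝ) ^ (-(k:ℝ)) ≤ 1 :=
            Real.rpow_le_one_of_one_le_of_nonpos (by norm_num)
              (neg_nonpos.mpr (Nat.cast_nonneg k))
          have hpos : (0:ℝ) < (2:ℝ) ^ (-(k:ℝ)) := Real.rpow_pos_of_pos two_pos _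
          have hle1 : ((2:ℝ) ^ (-(k:ℝ))) ^ 2 ≤ 1 := by nlinarith
          have := ht2.1
          linarith
      calc volume ({t : ℝ | ENNReal.ofReal l < g t} ∩ I k)
          ≤ volume ({t ∈ Set.Ioo (-1:ℝ) 0 | ENNReal.ofReal l < g t}) + volume {(0:ℝ)} :=
            le_trans (measure_mono hsub) (measure_union_le _ _)
        _ = volume ({t ∈ Set.Ioo (-1:ℝ) 0 | ENNReal.ofReal l < g t}) := by
            rw [Real.volume_singleton, add_zero]
  have hdle1 : ∀ l, d l ≤ 1 := by
    intro l
    simp only [hd]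
    calc volume {t ∈ Set.Ioo (-1:ℝ) 0 | ENNReal.ofReal l < g t}
        ≤ volume (Set.Ioo (-1:ℝ) 0) := measure_mono (sep_subset _ _)
      _ = 1 := by rw [Real.volume_Ioo]; norm_num
  have hμanti : ∀ k, Antitone (μk k) := by
    intro k l1 l2 h
    simp only [hμk]
    apply measure_mono
    apply inter_subset_inter_left
    intro t ht
    exact lt_of_le_of_lt (ENNReal.ofReal_le_ofReal h) ht
  have h2netop : ∀ x : ℝ, ((2:ℝ≥0∞) ^ x) ≠ ⊤ := by
    intro x
    rw [← ENNReal.ofReal_ofNat 2, ENNReal.ofReal_rpow_of_pos two_pos]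
    exact ENNReal.ofReal_ne_top
  calc ∑' k : ℕ, ENNReal.ofReal (((2:ℝ) ^ (-(k:ℝ))) ^ a) *
          (∫⁻ s in Set.Ioc (-(((2:ℝ) ^ (-(k:ℝ))) ^ 2)) 0, g s ^ pstar) ^ (1/pstar)
      ≤ ∑' k : ℕ, (2:ℝ≥0∞) ^ (-(k:ℝ) * a)
          * (Cp * ∫⁻ l in Ioi (0:ℝ), μk k l ^ (1/pstar)) := by
        apply ENNReal.tsum_le_tsum
        intro k
        rw [hw k]
        apply mul_le_mul_right
        haveI : IsFiniteMeasure (volume.restrict (I k)) := ⟨by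
          rw [Measure.restrict_apply_univ]; exact measure_Ioc_lt_top⟩
        have hstep := stepA pstar hps1 (volume.restrict (I k)) g hgm.aemeasurable
        calc (∫⁻ s in Set.Ioc (-(((2:ℝ) ^ (-(k:ℝ))) ^ 2)) 0, g s ^ pstar) ^ (1/pstar)
            = (∫⁻ t, g t ^ pstar ∂(volume.restrict (I k))) ^ (1/pstar) := rfl
          _ ≤ Cp * ∫⁻ l in Ioi (0:ℝ),
                (volume.restrict (I k)) {t | ENNReal.ofReal l < g t} ^ (1/pstar) := hstep
          _ = Cp * ∫⁻ l in Ioi (0:ℝ), μk k l ^ (1/pstar) := by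
              congr 1
              apply lintegral_congr
              intro l
              rw [Measure.restrict_apply (hsetm l)]
    _ = Cp * ∑' k : ℕ, ∫⁻ l in Ioi (0:ℝ),
          (2:ℝ≥0∞) ^ (-(k:ℝ) * a) * μk k l ^ (1/pstar) := by
        rw [← ENNReal.tsum_mul_left]
        apply tsum_congr
        intro k
        rw [lintegral_const_mul' _ _ (h2netop _)]
        ring
    _ = Cp * ∫⁻ l in Ioi (0:ℝ), ∑' k : ℕ,
          (2:ℝ≥0∞) ^ (-(k:ℝ) * a) * μk k l ^ (1/pstar) := by
        congr 1
        refine (lintegral_tsum fun k => Measurable.aemeasurable (Antitone.measurable ?_)).symm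
        intro l1 l2 h
        exact mul_le_mul_right
          (ENNReal.rpow_le_rpow (hμanti k h) (by positivity)) _
    _ ≤ Cp * ∫⁻ l in Ioi (0:ℝ), C₂ * d l ^ (1/p) := by
        apply mul_le_mul_right
        apply lintegral_mono
        intro l
        calc ∑' k : ℕ, (2:ℝ≥0∞) ^ (-(k:ℝ) * a) * μk k l ^ (1/pstar)
            ≤ ∑' k : ℕ, (2:ℝ≥0∞) ^ (-(k:ℝ) * a)
                * min ((2:ℝ≥0∞) ^ (-(k:ℝ) * 2)) (d l) ^ (1/pstar) :=
              ENNReal.tsum_le_tsum fun k => mul_le_mul_right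
                (ENNReal.rpow_le_rpow (hμle k l) (by positivity)) _
          _ ≤ C₂ * d l ^ (1/p) := hC₂ (d l) (hdle1 l)
    _ = Cp * (C₂ * lorentzNorm p q f) := by
        rw [hlor, lintegral_const_mul' C₂ _ hC₂top]
    _ = Cp * C₂ * lorentzNorm p q f := by rw [mul_assoc]
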